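/- Consider the Common Atoms Model with parameters α, β > 0 on a measurable space X with measurable singletons and atomless base probability measure H: let (π_k)_{k≥1} be GEM(α) weights; let (ω_{l,k})_{l≥1}, for k ≥ 1, be mutually independent GEM(β) weight sequences; let (θ_l)_{l≥1} be i.i.d. with law H; all jointly independent. Set G*_k = ∑_{l≥1} ω_{l,k} δ_{θ_l}, q1 = 1/(1+α), and for a measurable set A define the covariance C(A) = E[∑_{k1,k2} π_{k1} π_{k2} G*_{k1}(A) G*_{k2}(A)] − H(A)² and the variance V(A) = E[G*_1(A)²] − H(A)². Then for every measurable set A with 0 < H(A) < 1, the correlation C(A)/V(A) equals 1 − (β/(2β+1))·(α/(1+α)); in particular it does not depend on A. -/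

import Mathlib

open MeasureTheory ProbabilityTheory

/-- The Beta(1, γ) distribution on [0,1]: density `x ↦ γ (1-x)^(γ-1)` w.r.t. Lebesgue
measure on `[0,1]`. -/
noncomputable def betaOne (γ : ℝ) : Measure ℝ :=
  (volume.restrict (Set.Icc (0:ℝ) 1)).withDensity
    fun x => ENNReal.ofReal (γ * (1 - x) ^ (γ - 1))

/-- Stick-breaking weights (0-indexed): `stick V k = V k * ∏_{i<k} (1 - V i)`. -/
noncomputable def stick {Ω : Type*} (V : ℕ → Ω → ℝ) (k : ℕ) (x : Ω) : ℝ :=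
  V k x * ∏ i ∈ Finset.range k, (1 - V i x)

/-- Index family for joint independence of the distributional sticks (ℝ-valued, first
block), all the observational sticks (ℝ-valued, second block, indexed by
(sequence, position)), and the common atoms (X-valued, third block). -/
abbrev famCAM (X : Type) : ℕ ⊕ (ℕ × ℕ) ⊕ ℕ → Type :=
  Sum.elim (fun _ => ℝ) (Sum.elim (fun _ => ℝ) (fun _ => X))

/-- Measurable-space structure on the family. -/
noncomputable def famCAMMS (X : Type) [mX : MeasurableSpace X] :
    ∀ i, MeasurableSpace (famCAM X i)
  | .inl _ => inferInstanceAs (MeasurableSpace ℝ)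
  | .inr (.inl _) => inferInstanceAs (MeasurableSpace ℝ)
  | .inr (.inr _) => mX

/-- The combined process of all sticks and atoms of the Common Atoms Model. -/
def famCAMF {Ω : Type*} {X : Type} (V : ℕ → Ω → ℝ) (W : ℕ → ℕ → Ω → ℝ)
    (θ : ℕ → Ω → X) : ∀ i, Ω → famCAM X i
  | .inl k => V k
  | .inr (.inl p) => W p.1 p.2
  | .inr (.inr l) => θ l

/-!
All second moments are computed in `ℝ≥0∞`, where series and integrals commute freely; since the
sticks lie in `[0, 1]` almost surely, the real integrals of the statement are their `toReal`s.
For stick-breaking weights `π` with Beta(1, γ) sticks, `E[∑ π_k²] = 1/(γ+1)` and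
`∑ (E π_k)² = 1/(2γ+1)`, while `∑_{k,k'} E[π_k π_k'] = ∑_{k,k'} E π_k E π_k' = 1`: the weights
sum to one almost surely, being at most one with expected sum one. Splitting each double series
into its diagonal and the rest, and using the independence of the blocks `(V_k)_k`, `(W_{k,l})_l`
and `(θ_l)_l`, gives with `P = H(A)`
* `E[G*_k(A)²] = P/(β+1) + (1 - 1/(β+1)) P²`,
* `E[G*_k(A) G*_k'(A)] = P/(2β+1) + (1 - 1/(2β+1)) P²` for `k ≠ k'`,
* `E[(∑ π_k G*_k(A))²] = E[G*_0(A)²]/(α+1) + (1 - 1/(α+1)) E[G*_0(A) G*_1(A)]`.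
After subtracting `P²`, numerator and denominator are both multiples of `P (1 - P)`.
-/

open scoped ENNReal
open Set

section BetaMoments

variable {γ : ℝ}

lemma intervalIntegrable_pow_mul_rpow (hγ : 0 < γ) (n : ℕ) :
    IntervalIntegrable (fun u : ℝ => u ^ n * (γ * u ^ (γ - 1))) volume 0 1 :=
  ((intervalIntegral.intervalIntegrable_rpow' (by linarith)).const_mul γ).continuousOn_mul
    (continuous_pow n).continuousOn

lemma intervalIntegral_pow_mul_rpow (hγ : 0 < γ) (n : ℕ) :
    ∫ u in (0:ℝ)..1, u ^ n * (γ * u ^ (γ - 1)) = γ / (γ + n) := by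
  have h : ∫ u in (0:ℝ)..1, u ^ n * (γ * u ^ (γ - 1)) = ∫ u in (0:ℝ)..1, γ * u ^ (γ - 1 + n) := by
    rw [intervalIntegral.integral_of_le zero_le_one, intervalIntegral.integral_of_le zero_le_one]
    refine setIntegral_congr_fun measurableSet_Ioc fun u hu => ?_
    rw [Real.rpow_add hu.1, Real.rpow_natCast]
    ring
  have hn : (0:ℝ) < γ + n := by positivity
  rw [h, intervalIntegral.integral_const_mul, integral_rpow (Or.inl (by linarith)),
    Real.one_rpow, Real.zero_rpow (by linarith), show γ - 1 + n + 1 = γ + n by ring]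
  ring

lemma lintegral_betaOne {g : ℝ → ℝ≥0∞} {φ : ℝ → ℝ} (hγ : 0 < γ) (hg : Measurable g)
    (hφ : Continuous φ) (hgφ : ∀ x ∈ Icc (0:ℝ) 1, g x = ENNReal.ofReal (φ x))
    (hφ0 : ∀ x ∈ Icc (0:ℝ) 1, 0 ≤ φ x) :
    ∫⁻ x, g x ∂betaOne γ = ENNReal.ofReal (∫ u in (0:ℝ)..1, φ (1 - u) * (γ * u ^ (γ - 1))) := by
  set f : ℝ → ℝ := fun u => φ (1 - u) * (γ * u ^ (γ - 1))
  have hf : IntervalIntegrable f volume 0 1 :=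
    ((intervalIntegral.intervalIntegrable_rpow' (by linarith)).const_mul γ).continuousOn_mul
      (hφ.comp (continuous_const.sub continuous_id)).continuousOn
  have hf' : IntegrableOn (fun x => f (1 - x)) (Icc 0 1) := by
    rw [← intervalIntegrable_iff_integrableOn_Icc_of_le zero_le_one]
    simpa using (hf.comp_sub_left 1).symm
  have hnn : ∀ x ∈ Icc (0:ℝ) 1, 0 ≤ f (1 - x) := fun x hx => by
    have := hφ0 x hx
    have : 0 ≤ 1 - x := by linarith [hx.2]
    simp only [f, sub_sub_cancel]
    positivity
  rw [betaOne, lintegral_withDensity_eq_lintegral_mul _ (by fun_prop) hg,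
    setLIntegral_congr_fun measurableSet_Icc
      (g := fun x => ENNReal.ofReal (f (1 - x))) (fun x hx => by
        have := hφ0 x hx
        have : 0 ≤ 1 - x := by linarith [hx.2]
        simp only [Pi.mul_apply, hgφ x hx, f, sub_sub_cancel]
        rw [← ENNReal.ofReal_mul (by positivity), mul_comm]),
    ← ofReal_integral_eq_lintegral_ofReal hf'
      ((ae_restrict_iff' measurableSet_Icc).mpr (Filter.Eventually.of_forall hnn)),
    integral_Icc_eq_integral_Ioc, ← intervalIntegral.integral_of_le zero_le_one,
    intervalIntegral.integral_comp_sub_left f 1]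
  norm_num

lemma lintegral_betaOne_ofReal (hγ : 0 < γ) :
    ∫⁻ x, ENNReal.ofReal x ∂betaOne γ = ENNReal.ofReal (1 / (γ + 1)) := by
  rw [lintegral_betaOne hγ ENNReal.measurable_ofReal continuous_id (fun _ _ => rfl)
    (fun x hx => hx.1)]
  have e : ∀ u : ℝ, id (1 - u) * (γ * u ^ (γ - 1))
      = u ^ 0 * (γ * u ^ (γ - 1)) - u ^ 1 * (γ * u ^ (γ - 1)) := fun u => by simp; ring
  simp only [e]
  rw [intervalIntegral.integral_sub (intervalIntegrable_pow_mul_rpow hγ 0)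
    (intervalIntegrable_pow_mul_rpow hγ 1), intervalIntegral_pow_mul_rpow hγ,
    intervalIntegral_pow_mul_rpow hγ]
  congr 1
  field_simp
  ring

lemma lintegral_betaOne_ofReal_one_sub (hγ : 0 < γ) :
    ∫⁻ x, ENNReal.ofReal (1 - x) ∂betaOne γ = ENNReal.ofReal (γ / (γ + 1)) := by
  rw [lintegral_betaOne (φ := fun x => 1 - x) hγ (by fun_prop) (by fun_prop) (fun _ _ => rfl)
    (fun x hx => by linarith [hx.2])]
  have e : ∀ u : ℝ, (1 - (1 - u)) * (γ * u ^ (γ - 1)) = u ^ 1 * (γ * u ^ (γ - 1)) :=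
    fun u => by ring
  simp only [e]
  rw [intervalIntegral_pow_mul_rpow hγ]
  norm_num

lemma lintegral_betaOne_ofReal_sq (hγ : 0 < γ) :
    ∫⁻ x, ENNReal.ofReal x ^ 2 ∂betaOne γ = ENNReal.ofReal (2 / ((γ + 1) * (γ + 2))) := by
  rw [lintegral_betaOne hγ (by fun_prop) (continuous_pow 2)
    (fun x hx => (ENNReal.ofReal_pow hx.1 2).symm) (fun x _ => sq_nonneg x)]
  have e : ∀ u : ℝ, (1 - u) ^ 2 * (γ * u ^ (γ - 1)) = u ^ 0 * (γ * u ^ (γ - 1))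
      - 2 * (u ^ 1 * (γ * u ^ (γ - 1))) + u ^ 2 * (γ * u ^ (γ - 1)) := fun u => by ring
  simp only [e]
  have I := intervalIntegrable_pow_mul_rpow hγ
  rw [intervalIntegral.integral_add ((I 0).sub ((I 1).const_mul 2)) (I 2),
    intervalIntegral.integral_sub (I 0) ((I 1).const_mul 2), intervalIntegral.integral_const_mul,
    intervalIntegral_pow_mul_rpow hγ, intervalIntegral_pow_mul_rpow hγ,
    intervalIntegral_pow_mul_rpow hγ]
  congr 1
  field_simp
  ring

lemma lintegral_betaOne_ofReal_one_sub_sq (hγ : 0 < γ) :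
    ∫⁻ x, ENNReal.ofReal (1 - x) ^ 2 ∂betaOne γ = ENNReal.ofReal (γ / (γ + 2)) := by
  rw [lintegral_betaOne (φ := fun x => (1 - x) ^ 2) hγ (by fun_prop) (by fun_prop)
    (fun x hx => (ENNReal.ofReal_pow (by linarith [hx.2]) 2).symm) (fun x _ => sq_nonneg _)]
  have e : ∀ u : ℝ, (1 - (1 - u)) ^ 2 * (γ * u ^ (γ - 1)) = u ^ 2 * (γ * u ^ (γ - 1)) :=
    fun u => by ring
  simp only [e]
  rw [intervalIntegral_pow_mul_rpow hγ]
  norm_num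

lemma betaOne_compl_Icc : betaOne γ (Icc 0 1)ᶜ = 0 := by
  rw [betaOne, withDensity_apply _ measurableSet_Icc.compl,
    Measure.restrict_restrict measurableSet_Icc.compl, compl_inter_self,
    Measure.restrict_empty, lintegral_zero_measure]

lemma ae_mem_Icc_of_map_eq_betaOne {Ω : Type*} [MeasurableSpace Ω] {μ : Measure Ω}
    {U : Ω → ℝ} (hU : Measurable U) (hlaw : μ.map U = betaOne γ) :
    ∀ᵐ x ∂μ, U x ∈ Icc (0:ℝ) 1 :=
  ae_of_ae_map hU.aemeasurable (hlaw ▸ ae_iff.2 betaOne_compl_Icc)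

end BetaMoments

lemma ENNReal.tsum_ofReal_mul_ofReal_pow {a r : ℝ} (ha : 0 ≤ a) (hr : 0 ≤ r) (hr1 : r < 1) :
    ∑' k : ℕ, ENNReal.ofReal a * ENNReal.ofReal r ^ k = ENNReal.ofReal (a / (1 - r)) := by
  rw [ENNReal.tsum_mul_left, ENNReal.tsum_geometric, ← ENNReal.ofReal_one,
    ← ENNReal.ofReal_sub _ hr, ← ENNReal.ofReal_inv_of_pos (by linarith),
    ← ENNReal.ofReal_mul ha, div_eq_mul_inv]

lemma ENNReal.tsum_tsum_mul_ite_eq {w : ℕ → ℕ → ℝ≥0∞} {d : ℝ≥0∞}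
    (htotal : ∑' k, ∑' k', w k k' = 1) (hdiag : ∑' k, w k k = d) (c c' : ℝ≥0∞) :
    ∑' k, ∑' k', w k k' * (if k = k' then c else c') = d * c + (1 - d) * c' := by
  set o := ∑' k, ∑' k', if k = k' then 0 else w k k'
  have hdiag' : ∀ f : ℕ → ℝ≥0∞, ∑' k, ∑' k', (if k = k' then f k' else 0) = ∑' k, f k :=
    fun f => tsum_congr fun k => by simp
  have hdo : d + o = 1 := by
    rw [← htotal, ← hdiag, ← hdiag' fun k => w k k, ← ENNReal.tsum_add]
    refine tsum_congr fun k => ?_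
    rw [← ENNReal.tsum_add]
    exact tsum_congr fun k' => by split_ifs with h <;> simp [h]
  rw [← ENNReal.eq_sub_of_add_eq' ENNReal.one_ne_top ((add_comm o d).trans hdo), ← hdiag,
    ← ENNReal.tsum_mul_right, ← hdiag' fun k => w k k * c, ← ENNReal.tsum_mul_right,
    ← ENNReal.tsum_add]
  refine tsum_congr fun k => ?_
  rw [← ENNReal.tsum_mul_right, ← ENNReal.tsum_add]
  exact tsum_congr fun k' => by split_ifs with h <;> simp [h]

lemma lintegral_tsum_mul_tsum {Ω : Type*} [MeasurableSpace Ω] {μ : Measure Ω}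
    {f g : ℕ → Ω → ℝ≥0∞} (hf : ∀ i, Measurable (f i)) (hg : ∀ j, Measurable (g j)) :
    ∫⁻ x, (∑' i, f i x) * (∑' j, g j x) ∂μ = ∑' i, ∑' j, ∫⁻ x, f i x * g j x ∂μ := by
  simp_rw [← ENNReal.tsum_mul_right, ← ENNReal.tsum_mul_left]
  rw [lintegral_tsum (f := fun i x => ∑' j, f i x * g j x)
    fun i => (Measurable.tsum fun j => (hf i).mul (hg j)).aemeasurable]
  exact tsum_congr fun i => lintegral_tsum fun j => ((hf i).mul (hg j)).aemeasurable

lemma lintegral_tsum_mul_tsum_of_diag {Ω : Type*} [MeasurableSpace Ω] {μ : Measure Ω}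
    {f g : ℕ → Ω → ℝ≥0∞} (hf : ∀ i, Measurable (f i)) (hg : ∀ j, Measurable (g j))
    {w : ℕ → ℕ → ℝ≥0∞} {d c c' : ℝ≥0∞}
    (hfg : ∀ i j, ∫⁻ x, f i x * g j x ∂μ = w i j * if i = j then c else c')
    (htotal : ∑' i, ∑' j, w i j = 1) (hdiag : ∑' i, w i i = d) :
    ∫⁻ x, (∑' i, f i x) * (∑' j, g j x) ∂μ = d * c + (1 - d) * c' := by
  rw [lintegral_tsum_mul_tsum hf hg]
  simp_rw [hfg]
  exact ENNReal.tsum_tsum_mul_ite_eq htotal hdiag c c'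

lemma lintegral_mul_prod_range_of_iIndepFun {Ω β : Type*} [MeasurableSpace Ω] [MeasurableSpace β]
    {μ : Measure Ω} {ν : Measure β} {U : ℕ → Ω → β} (hU : iIndepFun U μ)
    (hmU : ∀ i, Measurable (U i)) (hlaw : ∀ i, μ.map (U i) = ν) {g h : β → ℝ≥0∞}
    (hg : Measurable g) (hh : Measurable h) (k : ℕ) :
    ∫⁻ x, g (U k x) * ∏ i ∈ Finset.range k, h (U i x) ∂μ
      = (∫⁻ y, g y ∂ν) * (∫⁻ y, h y ∂ν) ^ k := by
  set φ : ℕ → β → ℝ≥0∞ := fun i => if i = k then g else h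
  have hφ : ∀ i, Measurable (φ i) := fun i => by
    by_cases hi : i = k <;> simp [φ, hi, hg, hh]
  have hφk : ∀ i ∈ Finset.range k, φ i = h := fun i hi => if_neg (Finset.mem_range.1 hi).ne
  have hprod : ∀ x, g (U k x) * ∏ i ∈ Finset.range k, h (U i x)
      = ∏ i ∈ Finset.range (k + 1), φ i (U i x) := fun x => by
    rw [Finset.prod_range_succ, Finset.prod_congr rfl fun i hi => congrFun (hφk i hi) (U i x),
      mul_comm]
    simp [φ]
  have hmap : ∀ i, ∫⁻ x, φ i (U i x) ∂μ = ∫⁻ y, φ i y ∂ν := fun i => by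
    rw [← hlaw i, lintegral_map (hφ i) (hmU i)]
  rw [lintegral_congr hprod, lintegral_prod_eq_prod_lintegral_of_indepFun _
    (fun i x => φ i (U i x)) (hU.comp φ hφ) fun i => (hφ i).comp (hmU i)]
  simp_rw [hmap]
  rw [Finset.prod_range_succ, Finset.prod_congr rfl fun i hi => by rw [hφk i hi],
    Finset.prod_const, Finset.card_range, mul_comm]
  simp [φ]

lemma lintegral_mul_eq_of_iIndep_of_disjoint {Ω ι : Type*} {mΩ : MeasurableSpace Ω}
    {μ : Measure Ω} {m : ι → MeasurableSpace Ω} (h_le : ∀ i, m i ≤ mΩ) (h : iIndep m μ)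
    {S T : Set ι} (hST : Disjoint S T) {f g : Ω → ℝ≥0∞} (hf : Measurable[⨆ i ∈ S, m i] f)
    (hg : Measurable[⨆ i ∈ T, m i] g) :
    ∫⁻ x, f x * g x ∂μ = (∫⁻ x, f x ∂μ) * ∫⁻ x, g x ∂μ :=
  lintegral_mul_eq_lintegral_mul_lintegral_of_independent_measurableSpace
    (iSup₂_le fun i _ => h_le i) (iSup₂_le fun i _ => h_le i) (indep_iSup_of_disjoint h_le h hST)
    hf hg

lemma integral_eq_toReal_lintegral {Ω : Type*} [MeasurableSpace Ω] {μ : Measure Ω}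
    {f : Ω → ℝ} {F : Ω → ℝ≥0∞} (hF : AEMeasurable F μ)
    (h : ∀ᵐ x ∂μ, 0 ≤ f x ∧ F x = ENNReal.ofReal (f x)) :
    ∫ x, f x ∂μ = (∫⁻ x, F x ∂μ).toReal := by
  rw [← integral_toReal hF (h.mono fun x hx => hx.2 ▸ ENNReal.ofReal_lt_top)]
  exact integral_congr_ae (h.mono fun x hx => by simp only [hx.2, ENNReal.toReal_ofReal hx.1])

lemma tsum_tsum_mul_mul_eq_sq (f g : ℕ → ℝ) :
    ∑' i, ∑' j, f i * f j * (g i * g j) = (∑' i, f i * g i) ^ 2 := by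
  simp_rw [show ∀ i j, f i * f j * (g i * g j) = f i * g i * (f j * g j) from
    fun i j => by ring, tsum_mul_left, tsum_mul_right, sq]

lemma ENNReal.ofReal_mul_add_one_sub_mul_ne_top {a : ℝ} {x y : ℝ≥0∞} (hx : x ≠ ∞) (hy : y ≠ ∞) :
    ENNReal.ofReal a * x + (1 - ENNReal.ofReal a) * y ≠ ∞ :=
  ENNReal.add_ne_top.2 ⟨ENNReal.mul_ne_top ENNReal.ofReal_ne_top hx,
    ENNReal.mul_ne_top (ENNReal.sub_ne_top ENNReal.one_ne_top) hy⟩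

lemma ENNReal.toReal_ofReal_mul_add_one_sub_mul {a : ℝ} (ha0 : 0 ≤ a) (ha1 : a ≤ 1)
    {x y : ℝ≥0∞} (hx : x ≠ ∞) (hy : y ≠ ∞) :
    (ENNReal.ofReal a * x + (1 - ENNReal.ofReal a) * y).toReal
      = a * x.toReal + (1 - a) * y.toReal := by
  rw [ENNReal.toReal_add (ENNReal.mul_ne_top ENNReal.ofReal_ne_top hx)
    (ENNReal.mul_ne_top (ENNReal.sub_ne_top ENNReal.one_ne_top) hy), ENNReal.toReal_mul,
    ENNReal.toReal_mul, ← ENNReal.ofReal_one, ← ENNReal.ofReal_sub _ ha0,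
    ENNReal.toReal_ofReal ha0, ENNReal.toReal_ofReal (sub_nonneg.2 ha1)]

noncomputable def stickWeight {Ω : Type*} (U : ℕ → Ω → ℝ) (k : ℕ) (x : Ω) : ℝ≥0∞ :=
  ENNReal.ofReal (U k x) * ∏ i ∈ Finset.range k, ENNReal.ofReal (1 - U i x)

lemma measurable_stickWeight {Ω : Type*} {mΩ : MeasurableSpace Ω} {U : ℕ → Ω → ℝ}
    (hU : ∀ i, Measurable (U i)) (k : ℕ) : Measurable (stickWeight U k) :=
  (ENNReal.measurable_ofReal.comp (hU k)).mul
    (Finset.measurable_prod _ fun i _ =>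
      ENNReal.measurable_ofReal.comp (measurable_const.sub (hU i)))

section Stick

variable {Ω : Type*} (U : ℕ → Ω → ℝ) (x : Ω)

lemma sum_range_stick (n : ℕ) :
    ∑ k ∈ Finset.range n, stick U k x = 1 - ∏ i ∈ Finset.range n, (1 - U i x) := by
  induction n with
  | zero => simp
  | succ n ih => rw [Finset.sum_range_succ, Finset.prod_range_succ, ih, stick]; ring

variable {U x} (hU : ∀ i, U i x ∈ Icc (0:ℝ) 1)
include hU

lemma stick_nonneg (k : ℕ) : 0 ≤ stick U k x :=
  mul_nonneg (hU k).1 (Finset.prod_nonneg fun i _ => by linarith [(hU i).2])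

lemma sum_range_stick_le_one (n : ℕ) : ∑ k ∈ Finset.range n, stick U k x ≤ 1 := by
  rw [sum_range_stick]
  linarith [Finset.prod_nonneg fun i (_ : i ∈ Finset.range n) => sub_nonneg.2 (hU i).2]

lemma summable_stick : Summable fun k => stick U k x :=
  summable_of_sum_range_le (stick_nonneg hU) (sum_range_stick_le_one hU)

lemma tsum_stick_le_one : ∑' k, stick U k x ≤ 1 :=
  (summable_stick hU).tsum_le_of_sum_range_le (sum_range_stick_le_one hU)

lemma tsum_stick_mul_mem_Icc {a : ℕ → ℝ} (ha : ∀ k, a k ∈ Icc (0:ℝ) 1) :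
    ∑' k, stick U k x * a k ∈ Icc (0:ℝ) 1 := by
  have hle : ∀ k, stick U k x * a k ≤ stick U k x :=
    fun k => mul_le_of_le_one_right (stick_nonneg hU k) (ha k).2
  have hnn : ∀ k, 0 ≤ stick U k x * a k := fun k => mul_nonneg (stick_nonneg hU k) (ha k).1
  exact ⟨tsum_nonneg hnn, ((Summable.of_nonneg_of_le hnn hle (summable_stick hU)).tsum_le_tsum
    hle (summable_stick hU)).trans (tsum_stick_le_one hU)⟩

lemma ofReal_stick (k : ℕ) : ENNReal.ofReal (stick U k x) = stickWeight U k x := by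
  rw [stick, stickWeight, ENNReal.ofReal_mul (hU k).1,
    ENNReal.ofReal_prod_of_nonneg fun i _ => sub_nonneg.2 (hU i).2]

lemma tsum_stickWeight_le_one : ∑' k, stickWeight U k x ≤ 1 := by
  simp_rw [← ofReal_stick hU]
  rw [← ENNReal.ofReal_tsum_of_nonneg (stick_nonneg hU) (summable_stick hU)]
  exact ENNReal.ofReal_le_one.2 (tsum_stick_le_one hU)

lemma ofReal_tsum_stick_mul {a : ℕ → ℝ} (ha : ∀ k, a k ∈ Icc (0:ℝ) 1) :
    ENNReal.ofReal (∑' k, stick U k x * a k)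
      = ∑' k, stickWeight U k x * ENNReal.ofReal (a k) := by
  have hnn : ∀ k, 0 ≤ stick U k x * a k := fun k => mul_nonneg (stick_nonneg hU k) (ha k).1
  rw [ENNReal.ofReal_tsum_of_nonneg hnn (Summable.of_nonneg_of_le hnn
    (fun k => mul_le_of_le_one_right (stick_nonneg hU k) (ha k).2) (summable_stick hU))]
  simp_rw [ENNReal.ofReal_mul (stick_nonneg hU _), ofReal_stick hU]

end Stick

section StickBreaking

variable {Ω : Type*} [MeasurableSpace Ω] {μ : Measure Ω} {U : ℕ → Ω → ℝ} {γ : ℝ}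

variable (hU : iIndepFun U μ) (hmU : ∀ i, Measurable (U i)) (hlaw : ∀ i, μ.map (U i) = betaOne γ)
  (hγ : 0 < γ)
include hU hmU hlaw hγ

lemma lintegral_stickWeight (k : ℕ) :
    ∫⁻ x, stickWeight U k x ∂μ
      = ENNReal.ofReal (1 / (γ + 1)) * ENNReal.ofReal (γ / (γ + 1)) ^ k := by
  rw [← lintegral_betaOne_ofReal hγ, ← lintegral_betaOne_ofReal_one_sub hγ]
  exact lintegral_mul_prod_range_of_iIndepFun hU hmU hlaw (g := ENNReal.ofReal)
    (h := fun y => ENNReal.ofReal (1 - y)) (by fun_prop) (by fun_prop) k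

lemma lintegral_stickWeight_sq (k : ℕ) :
    ∫⁻ x, stickWeight U k x ^ 2 ∂μ
      = ENNReal.ofReal (2 / ((γ + 1) * (γ + 2))) * ENNReal.ofReal (γ / (γ + 2)) ^ k := by
  rw [← lintegral_betaOne_ofReal_sq hγ, ← lintegral_betaOne_ofReal_one_sub_sq hγ]
  simp_rw [stickWeight, mul_pow, ← Finset.prod_pow]
  exact lintegral_mul_prod_range_of_iIndepFun hU hmU hlaw (g := fun y => ENNReal.ofReal y ^ 2)
    (h := fun y => ENNReal.ofReal (1 - y) ^ 2) (by fun_prop) (by fun_prop) k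

lemma tsum_lintegral_stickWeight : ∑' k, ∫⁻ x, stickWeight U k x ∂μ = 1 := by
  simp_rw [lintegral_stickWeight hU hmU hlaw hγ]
  rw [ENNReal.tsum_ofReal_mul_ofReal_pow (by positivity) (by positivity)
    ((div_lt_one (by linarith)).2 (by linarith)), ← ENNReal.ofReal_one]
  congr 1
  field_simp
  ring

lemma tsum_lintegral_stickWeight_sq :
    ∑' k, ∫⁻ x, stickWeight U k x ^ 2 ∂μ = ENNReal.ofReal (1 / (γ + 1)) := by
  simp_rw [lintegral_stickWeight_sq hU hmU hlaw hγ]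
  rw [ENNReal.tsum_ofReal_mul_ofReal_pow (by positivity) (by positivity)
    ((div_lt_one (by linarith)).2 (by linarith))]
  congr 1
  field_simp
  ring

lemma tsum_sq_lintegral_stickWeight :
    ∑' k, (∫⁻ x, stickWeight U k x ∂μ) ^ 2 = ENNReal.ofReal (1 / (2 * γ + 1)) := by
  simp_rw [lintegral_stickWeight hU hmU hlaw hγ, mul_pow, ← pow_mul, pow_mul',
    ← ENNReal.ofReal_pow (by positivity : (0:ℝ) ≤ γ / (γ + 1)),
    ← ENNReal.ofReal_pow (by positivity : (0:ℝ) ≤ 1 / (γ + 1))]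
  rw [ENNReal.tsum_ofReal_mul_ofReal_pow (by positivity) (by positivity)
    (pow_lt_one₀ (by positivity) ((div_lt_one (by linarith)).2 (by linarith)) two_ne_zero)]
  congr 1
  have h : 1 - (γ / (γ + 1)) ^ 2 = (2 * γ + 1) / (γ + 1) ^ 2 := by
    field_simp
    ring
  rw [h]
  field_simp

lemma ae_tsum_stickWeight_eq_one [IsProbabilityMeasure μ] :
    ∀ᵐ x ∂μ, ∑' k, stickWeight U k x = 1 := by
  have hle : ∀ᵐ x ∂μ, ∑' k, stickWeight U k x ≤ 1 := by
    filter_upwards [ae_all_iff.2 fun i => ae_mem_Icc_of_map_eq_betaOne (hmU i) (hlaw i)]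
      with x hx using tsum_stickWeight_le_one hx
  have hint : ∫⁻ x, ∑' k, stickWeight U k x ∂μ = 1 := by
    rw [lintegral_tsum fun k => (measurable_stickWeight hmU k).aemeasurable,
      tsum_lintegral_stickWeight hU hmU hlaw hγ]
  exact ae_eq_of_ae_le_of_lintegral_le hle (by simp [hint]) aemeasurable_const
    (by simp [hint])

lemma tsum_tsum_lintegral_stickWeight_mul [IsProbabilityMeasure μ] :
    ∑' k, ∑' k', ∫⁻ x, stickWeight U k x * stickWeight U k' x ∂μ = 1 := by
  have hsq : ∀ᵐ x ∂μ, (∑' k, stickWeight U k x) * (∑' k, stickWeight U k x) = 1 :=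
    (ae_tsum_stickWeight_eq_one hU hmU hlaw hγ).mono fun x hx => by rw [hx, mul_one]
  rw [← lintegral_tsum_mul_tsum (measurable_stickWeight hmU) (measurable_stickWeight hmU),
    lintegral_congr_ae hsq, lintegral_one, measure_univ]

end StickBreaking

section CommonAtoms

variable {Ω : Type*} {X : Type} [MeasurableSpace X]
  (V : ℕ → Ω → ℝ) (W : ℕ → ℕ → Ω → ℝ) (θ : ℕ → Ω → X) (A : Set X)

/-- `G*_k(A)`, in `ℝ≥0∞`. -/
noncomputable def commonAtomsMass (k : ℕ) (x : Ω) : ℝ≥0∞ :=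
  ∑' l, stickWeight (W k) l x * A.indicator 1 (θ l x)

/-- `∑_k π_k G*_k(A)`, in `ℝ≥0∞`. -/
noncomputable def mixtureMass (x : Ω) : ℝ≥0∞ :=
  ∑' k, stickWeight V k x * commonAtomsMass W θ A k x

noncomputable abbrev camSigma (i : ℕ ⊕ (ℕ × ℕ) ⊕ ℕ) : MeasurableSpace Ω :=
  (famCAMMS X i).comap (famCAMF V W θ i)

abbrev camRow (k : ℕ) : Set (ℕ ⊕ (ℕ × ℕ) ⊕ ℕ) := range fun l => .inr (.inl (k, l))

abbrev camAtoms : Set (ℕ ⊕ (ℕ × ℕ) ⊕ ℕ) := range fun l => .inr (.inr l)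

variable {V W θ A}

lemma disjoint_camRow {k₁ k₂ : ℕ} (h : k₁ ≠ k₂) : Disjoint (camRow k₁) (camRow k₂) :=
  disjoint_range_iff.2 fun _ _ => by simp [h]

lemma disjoint_camRow_camAtoms (k : ℕ) : Disjoint (camRow k) camAtoms :=
  disjoint_range_iff.2 fun _ _ => by simp

lemma measurable_stickWeight_mul_indicator {mΩ : MeasurableSpace Ω} {k : ℕ}
    (hW : ∀ l, Measurable (W k l)) (hθ : ∀ l, Measurable (θ l)) (hA : MeasurableSet A)
    (l : ℕ) : Measurable fun x => stickWeight (W k) l x * A.indicator 1 (θ l x) :=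
  (measurable_stickWeight hW l).fun_mul ((measurable_one.indicator hA).comp (hθ l))

lemma measurable_commonAtomsMass {mΩ : MeasurableSpace Ω} {k : ℕ}
    (hW : ∀ l, Measurable (W k l)) (hθ : ∀ l, Measurable (θ l)) (hA : MeasurableSet A) :
    Measurable (commonAtomsMass W θ A k) :=
  Measurable.tsum (measurable_stickWeight_mul_indicator hW hθ hA)

lemma measurable_V_of_mem {S : Set (ℕ ⊕ (ℕ × ℕ) ⊕ ℕ)} {k : ℕ} (h : .inl k ∈ S) :
    Measurable[⨆ i ∈ S, camSigma V W θ i] (V k) :=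
  Measurable.of_comap_le (le_iSup₂_of_le (f := fun i _ => camSigma V W θ i) _ h le_rfl)

lemma measurable_W_of_mem {S : Set (ℕ ⊕ (ℕ × ℕ) ⊕ ℕ)} {k l : ℕ} (h : .inr (.inl (k, l)) ∈ S) :
    Measurable[⨆ i ∈ S, camSigma V W θ i] (W k l) :=
  Measurable.of_comap_le (le_iSup₂_of_le (f := fun i _ => camSigma V W θ i) _ h le_rfl)

lemma measurable_θ_of_mem {S : Set (ℕ ⊕ (ℕ × ℕ) ⊕ ℕ)} {l : ℕ} (h : .inr (.inr l) ∈ S) :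
    Measurable[⨆ i ∈ S, camSigma V W θ i] (θ l) :=
  Measurable.of_comap_le (le_iSup₂_of_le (f := fun i _ => camSigma V W θ i) _ h le_rfl)

lemma measurable_stickWeight_W_of_subset {S : Set (ℕ ⊕ (ℕ × ℕ) ⊕ ℕ)} {k : ℕ}
    (h : camRow k ⊆ S) (l : ℕ) :
    Measurable[⨆ i ∈ S, camSigma V W θ i] (stickWeight (W k) l) :=
  measurable_stickWeight (fun i => measurable_W_of_mem (h (mem_range_self i))) l

lemma measurable_indicator_θ_of_mem {S : Set (ℕ ⊕ (ℕ × ℕ) ⊕ ℕ)} {l : ℕ} (hA : MeasurableSet A)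
    (h : .inr (.inr l) ∈ S) :
    Measurable[⨆ i ∈ S, camSigma V W θ i] fun x => A.indicator (1 : X → ℝ≥0∞) (θ l x) :=
  (measurable_one.indicator hA).comp (measurable_θ_of_mem h)

variable [MeasurableSpace Ω] {μ : Measure Ω} {H : Measure X} {α β : ℝ}

lemma iIndepFun_V (hindep : iIndepFun (m := famCAMMS X) (famCAMF V W θ) μ) : iIndepFun V μ :=
  hindep.precomp (g := Sum.inl) Sum.inl_injective

lemma iIndepFun_W (hindep : iIndepFun (m := famCAMMS X) (famCAMF V W θ) μ) (k : ℕ) :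
    iIndepFun (W k) μ :=
  hindep.precomp (g := fun l => .inr (.inl (k, l))) fun a b h => by simpa using h

lemma lintegral_indicator_θ (hmθ : ∀ l, Measurable (θ l)) (hlawθ : ∀ l, μ.map (θ l) = H)
    (hA : MeasurableSet A) (l : ℕ) :
    ∫⁻ x, A.indicator 1 (θ l x) ∂μ = H A := by
  rw [← lintegral_map (measurable_one.indicator hA) (hmθ l), hlawθ l, lintegral_indicator_one hA]

variable (hmV : ∀ k, Measurable (V k)) (hmW : ∀ k l, Measurable (W k l))
  (hmθ : ∀ l, Measurable (θ l)) (hindep : iIndepFun (m := famCAMMS X) (famCAMF V W θ) μ)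
include hmV hmW hmθ hindep

lemma lintegral_mul_of_disjoint_blocks {S T : Set (ℕ ⊕ (ℕ × ℕ) ⊕ ℕ)} (hST : Disjoint S T)
    {f g : Ω → ℝ≥0∞} (hf : Measurable[⨆ i ∈ S, camSigma V W θ i] f)
    (hg : Measurable[⨆ i ∈ T, camSigma V W θ i] g) :
    ∫⁻ x, f x * g x ∂μ = (∫⁻ x, f x ∂μ) * ∫⁻ x, g x ∂μ := by
  refine lintegral_mul_eq_of_iIndep_of_disjoint (fun i => ?_) hindep.iIndep hST hf hg
  rcases i with k | ⟨k, l⟩ | l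
  · exact (hmV k).comap_le
  · exact (hmW k l).comap_le
  · exact (hmθ l).comap_le

lemma lintegral_indicator_θ_mul (hlawθ : ∀ l, μ.map (θ l) = H) (hA : MeasurableSet A)
    (l l' : ℕ) :
    ∫⁻ x, A.indicator 1 (θ l x) * A.indicator 1 (θ l' x) ∂μ = if l = l' then H A else H A ^ 2 := by
  split_ifs with h
  · subst h
    have hidem : ∀ y, A.indicator (1 : X → ℝ≥0∞) y * A.indicator 1 y = A.indicator 1 y :=
      fun y => by by_cases hy : y ∈ A <;> simp [hy]
    simp_rw [hidem]
    exact lintegral_indicator_θ hmθ hlawθ hA l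
  · rw [lintegral_mul_of_disjoint_blocks hmV hmW hmθ hindep
      (S := {.inr (.inr l)}) (T := {.inr (.inr l')})
      (f := fun x => A.indicator 1 (θ l x)) (g := fun x => A.indicator 1 (θ l' x))
      (by simpa using h)
      (measurable_indicator_θ_of_mem hA (mem_singleton _))
      (measurable_indicator_θ_of_mem hA (mem_singleton _)),
      lintegral_indicator_θ hmθ hlawθ hA, lintegral_indicator_θ hmθ hlawθ hA, sq]

lemma lintegral_mul_indicator_θ_mul (hlawθ : ∀ l, μ.map (θ l) = H) (hA : MeasurableSet A)
    {S : Set (ℕ ⊕ (ℕ × ℕ) ⊕ ℕ)} (hS : Disjoint S camAtoms) {F : Ω → ℝ≥0∞}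
    (hF : Measurable[⨆ i ∈ S, camSigma V W θ i] F) (l l' : ℕ) :
    ∫⁻ x, F x * (A.indicator 1 (θ l x) * A.indicator 1 (θ l' x)) ∂μ
      = (∫⁻ x, F x ∂μ) * if l = l' then H A else H A ^ 2 := by
  rw [lintegral_mul_of_disjoint_blocks hmV hmW hmθ hindep hS hF
    ((measurable_indicator_θ_of_mem hA (mem_range_self l)).fun_mul
      (measurable_indicator_θ_of_mem hA (mem_range_self l'))),
    lintegral_indicator_θ_mul hmV hmW hmθ hindep hlawθ hA]

lemma lintegral_commonAtomsMass_sq [IsProbabilityMeasure μ] (hβ : 0 < β)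
    (hlawW : ∀ k l, μ.map (W k l) = betaOne β)
    (hlawθ : ∀ l, μ.map (θ l) = H) (hA : MeasurableSet A) (k : ℕ) :
    ∫⁻ x, commonAtomsMass W θ A k x ^ 2 ∂μ
      = ENNReal.ofReal (1 / (β + 1)) * H A + (1 - ENNReal.ofReal (1 / (β + 1))) * H A ^ 2 := by
  have hmf := measurable_stickWeight_mul_indicator (hmW k) hmθ hA
  have hW := iIndepFun_W hindep k
  rw [lintegral_congr fun x => sq (commonAtomsMass W θ A k x)]
  refine lintegral_tsum_mul_tsum_of_diag hmf hmf (fun l l' => ?_)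
    (tsum_tsum_lintegral_stickWeight_mul hW (hmW k) (hlawW k) hβ)
    (by simpa only [sq] using tsum_lintegral_stickWeight_sq hW (hmW k) (hlawW k) hβ)
  rw [← lintegral_mul_indicator_θ_mul hmV hmW hmθ hindep hlawθ hA (disjoint_camRow_camAtoms k)
    ((measurable_stickWeight_W_of_subset subset_rfl l).fun_mul
      (measurable_stickWeight_W_of_subset subset_rfl l'))]
  exact lintegral_congr fun x => by ring

lemma lintegral_commonAtomsMass_mul (hβ : 0 < β) (hlawW : ∀ k l, μ.map (W k l) = betaOne β)
    (hlawθ : ∀ l, μ.map (θ l) = H) (hA : MeasurableSet A) {k₁ k₂ : ℕ} (hk : k₁ ≠ k₂) :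
    ∫⁻ x, commonAtomsMass W θ A k₁ x * commonAtomsMass W θ A k₂ x ∂μ
      = ENNReal.ofReal (1 / (2 * β + 1)) * H A
        + (1 - ENNReal.ofReal (1 / (2 * β + 1))) * H A ^ 2 := by
  have hW := iIndepFun_W hindep
  have hmean : ∀ k l, ∫⁻ x, stickWeight (W k) l x ∂μ
      = ENNReal.ofReal (1 / (β + 1)) * ENNReal.ofReal (β / (β + 1)) ^ l := fun k =>
    lintegral_stickWeight (hW k) (hmW k) (hlawW k) hβ
  refine lintegral_tsum_mul_tsum_of_diag (measurable_stickWeight_mul_indicator (hmW k₁) hmθ hA)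
    (measurable_stickWeight_mul_indicator (hmW k₂) hmθ hA)
    (w := fun l l' => (∫⁻ x, stickWeight (W k₁) l x ∂μ) * ∫⁻ x, stickWeight (W k₂) l' x ∂μ)
    (fun l l' => ?_) ?_ ?_
  · rw [← lintegral_mul_of_disjoint_blocks hmV hmW hmθ hindep (disjoint_camRow hk)
        (measurable_stickWeight_W_of_subset subset_rfl l)
        (measurable_stickWeight_W_of_subset subset_rfl l'),
      ← lintegral_mul_indicator_θ_mul hmV hmW hmθ hindep hlawθ hA
        (disjoint_union_left.2 ⟨disjoint_camRow_camAtoms k₁, disjoint_camRow_camAtoms k₂⟩)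
        ((measurable_stickWeight_W_of_subset subset_union_left l).fun_mul
          (measurable_stickWeight_W_of_subset subset_union_right l'))]
    exact lintegral_congr fun x => by ring
  · simp_rw [ENNReal.tsum_mul_left, ENNReal.tsum_mul_right,
      tsum_lintegral_stickWeight (hW k₁) (hmW k₁) (hlawW k₁) hβ,
      tsum_lintegral_stickWeight (hW k₂) (hmW k₂) (hlawW k₂) hβ, one_mul]
  · simpa only [sq, hmean] using tsum_sq_lintegral_stickWeight (hW k₁) (hmW k₁) (hlawW k₁) hβ

lemma lintegral_commonAtomsMass_mul_eq_ite [IsProbabilityMeasure μ] (hβ : 0 < β)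
    (hlawW : ∀ k l, μ.map (W k l) = betaOne β) (hlawθ : ∀ l, μ.map (θ l) = H)
    (hA : MeasurableSet A) (k₁ k₂ : ℕ) :
    ∫⁻ x, commonAtomsMass W θ A k₁ x * commonAtomsMass W θ A k₂ x ∂μ
      = if k₁ = k₂ then ∫⁻ x, commonAtomsMass W θ A 0 x ^ 2 ∂μ
        else ∫⁻ x, commonAtomsMass W θ A 0 x * commonAtomsMass W θ A 1 x ∂μ := by
  split_ifs with h
  · simp_rw [h, ← sq, lintegral_commonAtomsMass_sq hmV hmW hmθ hindep hβ hlawW hlawθ hA]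
  · rw [lintegral_commonAtomsMass_mul hmV hmW hmθ hindep hβ hlawW hlawθ hA h,
      lintegral_commonAtomsMass_mul hmV hmW hmθ hindep hβ hlawW hlawθ hA zero_ne_one]

lemma lintegral_mixtureMass_sq [IsProbabilityMeasure μ] (hα : 0 < α)
    (hlawV : ∀ k, μ.map (V k) = betaOne α) (hβ : 0 < β)
    (hlawW : ∀ k l, μ.map (W k l) = betaOne β) (hlawθ : ∀ l, μ.map (θ l) = H)
    (hA : MeasurableSet A) :
    ∫⁻ x, mixtureMass V W θ A x ^ 2 ∂μ
      = ENNReal.ofReal (1 / (α + 1)) * ∫⁻ x, commonAtomsMass W θ A 0 x ^ 2 ∂μ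
        + (1 - ENNReal.ofReal (1 / (α + 1)))
          * ∫⁻ x, commonAtomsMass W θ A 0 x * commonAtomsMass W θ A 1 x ∂μ := by
  have hV := iIndepFun_V hindep
  have hmf : ∀ k, Measurable fun x => stickWeight V k x * commonAtomsMass W θ A k x := fun k =>
    (measurable_stickWeight hmV k).fun_mul (measurable_commonAtomsMass (hmW k) hmθ hA)
  have hmG : ∀ k, Measurable[⨆ i ∈ range Sum.inr, camSigma V W θ i] (commonAtomsMass W θ A k) :=
    fun k => measurable_commonAtomsMass (fun l => measurable_W_of_mem ⟨_, rfl⟩)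
      (fun l => measurable_θ_of_mem ⟨_, rfl⟩) hA
  have hmπ : ∀ k, Measurable[⨆ i ∈ range Sum.inl, camSigma V W θ i] (stickWeight V k) :=
    measurable_stickWeight fun i => measurable_V_of_mem (mem_range_self i)
  rw [lintegral_congr fun x => sq (mixtureMass V W θ A x)]
  refine lintegral_tsum_mul_tsum_of_diag hmf hmf (fun k₁ k₂ => ?_)
    (tsum_tsum_lintegral_stickWeight_mul hV hmV hlawV hα)
    (by simpa only [sq] using tsum_lintegral_stickWeight_sq hV hmV hlawV hα)
  rw [← lintegral_commonAtomsMass_mul_eq_ite hmV hmW hmθ hindep hβ hlawW hlawθ hA,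
    ← lintegral_mul_of_disjoint_blocks hmV hmW hmθ hindep
      (disjoint_range_iff.2 fun _ _ => Sum.inl_ne_inr) ((hmπ k₁).fun_mul (hmπ k₂))
      ((hmG k₁).fun_mul (hmG k₂))]
  exact lintegral_congr fun x => by ring

end CommonAtoms

section Bridge

variable {Ω : Type*} {X : Type} {V : ℕ → Ω → ℝ} {W : ℕ → ℕ → Ω → ℝ} {θ : ℕ → Ω → X}
  {A : Set X} {x : Ω}

lemma commonAtomsMass_eq_ofReal {k : ℕ} (hW : ∀ i, W k i x ∈ Icc (0:ℝ) 1) :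
    ∑' l, A.indicator (fun _ => stick (W k) l x) (θ l x) ∈ Icc (0:ℝ) 1
      ∧ commonAtomsMass W θ A k x
        = ENNReal.ofReal (∑' l, A.indicator (fun _ => stick (W k) l x) (θ l x)) := by
  have hsplit : ∀ l, A.indicator (fun _ => stick (W k) l x) (θ l x)
      = stick (W k) l x * A.indicator 1 (θ l x) := fun l => by
    by_cases h : θ l x ∈ A <;> simp [h]
  have hind : ∀ l, A.indicator (1 : X → ℝ) (θ l x) ∈ Icc (0:ℝ) 1 := fun l => by
    by_cases h : θ l x ∈ A <;> simp [h]
  simp_rw [hsplit]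
  refine ⟨tsum_stick_mul_mem_Icc hW hind, ?_⟩
  rw [ofReal_tsum_stick_mul hW hind, commonAtomsMass]
  refine tsum_congr fun l => ?_
  by_cases h : θ l x ∈ A <;> simp [h]

lemma commonAtomsMass_sq_eq_ofReal {k : ℕ} (hW : ∀ i, W k i x ∈ Icc (0:ℝ) 1) :
    0 ≤ (∑' l, A.indicator (fun _ => stick (W k) l x) (θ l x)) ^ 2
      ∧ commonAtomsMass W θ A k x ^ 2
        = ENNReal.ofReal ((∑' l, A.indicator (fun _ => stick (W k) l x) (θ l x)) ^ 2) := by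
  obtain ⟨hS, hSeq⟩ := commonAtomsMass_eq_ofReal (A := A) (θ := θ) hW
  exact ⟨sq_nonneg _, by rw [hSeq, ENNReal.ofReal_pow hS.1]⟩

lemma mixtureMass_sq_eq_ofReal (hV : ∀ i, V i x ∈ Icc (0:ℝ) 1)
    (hW : ∀ k i, W k i x ∈ Icc (0:ℝ) 1) :
    0 ≤ ∑' (k1 : ℕ) (k2 : ℕ), stick V k1 x * stick V k2 x *
          ((∑' l : ℕ, A.indicator (fun _ => stick (W k1) l x) (θ l x)) *
            (∑' l : ℕ, A.indicator (fun _ => stick (W k2) l x) (θ l x)))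
      ∧ mixtureMass V W θ A x ^ 2 = ENNReal.ofReal (∑' (k1 : ℕ) (k2 : ℕ), stick V k1 x *
          stick V k2 x * ((∑' l : ℕ, A.indicator (fun _ => stick (W k1) l x) (θ l x)) *
            (∑' l : ℕ, A.indicator (fun _ => stick (W k2) l x) (θ l x)))) := by
  have hS := fun k => commonAtomsMass_eq_ofReal (A := A) (θ := θ) (hW k)
  rw [tsum_tsum_mul_mul_eq_sq, mixtureMass]
  refine ⟨sq_nonneg _, ?_⟩
  rw [ENNReal.ofReal_pow (tsum_stick_mul_mem_Icc hV fun k => (hS k).1).1,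
    ofReal_tsum_stick_mul hV fun k => (hS k).1]
  simp_rw [(hS _).2]

end Bridge

lemma cam_correlation_formula {α β : ℝ} {P : ℝ≥0∞} (hα : 0 < α) (hβ : 0 < β) (hP0 : 0 < P)
    (hP1 : P < 1) :
    ((ENNReal.ofReal (1 / (α + 1))
          * (ENNReal.ofReal (1 / (β + 1)) * P + (1 - ENNReal.ofReal (1 / (β + 1))) * P ^ 2)
        + (1 - ENNReal.ofReal (1 / (α + 1))) * (ENNReal.ofReal (1 / (2 * β + 1)) * P
          + (1 - ENNReal.ofReal (1 / (2 * β + 1))) * P ^ 2)).toReal - P.toReal ^ 2)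
      / ((ENNReal.ofReal (1 / (β + 1)) * P + (1 - ENNReal.ofReal (1 / (β + 1))) * P ^ 2).toReal
        - P.toReal ^ 2)
      = 1 - β / (2 * β + 1) * (α / (1 + α)) := by
  have hP : P ≠ ∞ := hP1.ne_top
  have hP2 : P ^ 2 ≠ ∞ := ENNReal.pow_ne_top hP
  have hunit : ∀ {t : ℝ}, 0 < t → 1 / (t + 1) ≤ 1 := fun ht =>
    (div_le_one (by linarith)).2 (by linarith)
  have hmix := fun {t : ℝ} (ht : 0 < t) =>
    ENNReal.toReal_ofReal_mul_add_one_sub_mul (by positivity) (hunit ht) hP hP2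
  rw [ENNReal.toReal_ofReal_mul_add_one_sub_mul (by positivity) (hunit hα)
      (ENNReal.ofReal_mul_add_one_sub_mul_ne_top hP hP2)
      (ENNReal.ofReal_mul_add_one_sub_mul_ne_top hP hP2),
    hmix hβ, hmix (by positivity : 0 < 2 * β), ENNReal.toReal_pow]
  set p := P.toReal
  have hp : 0 < p * (1 - p) := mul_pos (ENNReal.toReal_pos hP0.ne' hP)
    (sub_pos.2 (ENNReal.toReal_lt_of_lt_ofReal (by simpa using hP1)))
  have hden : 1 / (β + 1) * p + (1 - 1 / (β + 1)) * p ^ 2 - p ^ 2 = p * (1 - p) / (β + 1) := by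
    field_simp
    ring
  rw [hden, div_eq_iff (by positivity)]
  field_simp
  ring

theorem cam_correlation_general {Ω : Type*} {X : Type} [MeasurableSpace Ω] [MeasurableSpace X]
    (μ : Measure Ω) [IsProbabilityMeasure μ]
    (H : Measure X)
    (α β : ℝ) (hα : 0 < α) (hβ : 0 < β)
    (V : ℕ → Ω → ℝ) (W : ℕ → ℕ → Ω → ℝ) (θ : ℕ → Ω → X)
    (hmV : ∀ k, Measurable (V k)) (hmW : ∀ k l, Measurable (W k l))
    (hmθ : ∀ l, Measurable (θ l))
    (hlawV : ∀ k, μ.map (V k) = betaOne α)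
    (hlawW : ∀ k l, μ.map (W k l) = betaOne β)
    (hlawθ : ∀ l, μ.map (θ l) = H)
    (hindep : iIndepFun (m := famCAMMS X) (famCAMF V W θ) μ)
    (A : Set X) (hA : MeasurableSet A) (hA0 : 0 < H A) (hA1 : H A < 1) :
    (∫ x, (∑' (k1 : ℕ) (k2 : ℕ), stick V k1 x * stick V k2 x *
          ((∑' l : ℕ, A.indicator (fun _ => stick (W k1) l x) (θ l x)) *
            (∑' l : ℕ, A.indicator (fun _ => stick (W k2) l x) (θ l x)))) ∂μ
        - (H A).toReal ^ 2) /
      (∫ x, (∑' l : ℕ, A.indicator (fun _ => stick (W 0) l x) (θ l x)) ^ 2 ∂μ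
        - (H A).toReal ^ 2)
      = 1 - β / (2 * β + 1) * (α / (1 + α)) := by
  have hgood : ∀ᵐ x ∂μ, (∀ k, V k x ∈ Icc (0:ℝ) 1) ∧ ∀ k l, W k l x ∈ Icc (0:ℝ) 1 :=
    (ae_all_iff.2 fun k => ae_mem_Icc_of_map_eq_betaOne (hmV k) (hlawV k)).and
      (ae_all_iff.2 fun k => ae_all_iff.2 fun l =>
        ae_mem_Icc_of_map_eq_betaOne (hmW k l) (hlawW k l))
  have hmG : ∀ k, Measurable (commonAtomsMass W θ A k) := fun k =>
    measurable_commonAtomsMass (hmW k) hmθ hA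
  have hmT : Measurable (mixtureMass V W θ A) :=
    Measurable.tsum fun k => (measurable_stickWeight hmV k).fun_mul (hmG k)
  rw [integral_eq_toReal_lintegral (F := fun x => mixtureMass V W θ A x ^ 2)
      (hmT.pow_const 2).aemeasurable
      (hgood.mono fun x hx => mixtureMass_sq_eq_ofReal hx.1 hx.2),
    integral_eq_toReal_lintegral (F := fun x => commonAtomsMass W θ A 0 x ^ 2)
      ((hmG 0).pow_const 2).aemeasurable
      (hgood.mono fun x hx => commonAtomsMass_sq_eq_ofReal (hx.2 0)),
    lintegral_mixtureMass_sq hmV hmW hmθ hindep hα hlawV hβ hlawW hlawθ hA,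
    lintegral_commonAtomsMass_sq hmV hmW hmθ hindep hβ hlawW hlawθ hA,
    lintegral_commonAtomsMass_mul hmV hmW hmθ hindep hβ hlawW hlawθ hA zero_ne_one]
  exact cam_correlation_formula hα hβ hA0 hA1

/-- correlation of the Common Atoms Model: with the same setup as the
covariance statement, for every measurable A with 0 < H(A) < 1, the ratio of the
covariance `C(A) = E[∑_{k1,k2} π_{k1} π_{k2} G*_{k1}(A) G*_{k2}(A)] − H(A)²` to the
variance `V(A) = E[G*_0(A)²] − H(A)²` equals `1 − (β/(2β+1))(α/(1+α))`,
independently of A. -/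
theorem cam_correlation {Ω : Type*} {X : Type} [MeasurableSpace Ω] [MeasurableSpace X]
    [MeasurableSingletonClass X]
    (μ : Measure Ω) [IsProbabilityMeasure μ]
    (H : Measure X) [IsProbabilityMeasure H] (hH : ∀ p : X, H {p} = 0)
    (α β : ℝ) (hα : 0 < α) (hβ : 0 < β)
    (V : ℕ → Ω → ℝ) (W : ℕ → ℕ → Ω → ℝ) (θ : ℕ → Ω → X)
    (hmV : ∀ k, Measurable (V k)) (hmW : ∀ k l, Measurable (W k l))
    (hmθ : ∀ l, Measurable (θ l))
    (hlawV : ∀ k, μ.map (V k) = betaOne α)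
    (hlawW : ∀ k l, μ.map (W k l) = betaOne β)
    (hlawθ : ∀ l, μ.map (θ l) = H)
    (hindep : iIndepFun (m := famCAMMS X) (famCAMF V W θ) μ)
    (A : Set X) (hA : MeasurableSet A) (hA0 : 0 < H A) (hA1 : H A < 1) :
    (∫ x, (∑' (k1 : ℕ) (k2 : ℕ), stick V k1 x * stick V k2 x *
          ((∑' l : ℕ, A.indicator (fun _ => stick (W k1) l x) (θ l x)) *
            (∑' l : ℕ, A.indicator (fun _ => stick (W k2) l x) (θ l x)))) ∂μ
        - (H A).toReal ^ 2) /
      (∫ x, (∑' l : ℕ, A.indicator (fun _ => stick (W 0) l x) (θ l x)) ^ 2 ∂μ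
        - (H A).toReal ^ 2)
      = 1 - β / (2 * β + 1) * (α / (1 + α)) :=
  cam_correlation_general μ H α β hα hβ V W θ hmV hmW hmθ hlawV hlawW hlawθ hindep A hA hA0 hA1
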